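/- Let A2 ∈ ℂ^{n×n}, B2 ∈ ℂ^{n×m}, and let N_{0i} ∈ ℂ^{n×m}, D_{0i} ∈ ℂ^{m×m} (i = 0,…,ω) satisfy s·N_0^#(s) - A2·N_0(s) = B2·D_0(s) for all s ∈ ℂ, where N_0(s) := Σ_i N_{0i}s^i and N_0^#(s) := Σ_i N_{0i}^# s^i (similarly for D_0). Let F1 ∈ ℂ^{p×p} and Z1, Z2 ∈ ℂ^{m×p} be arbitrary. Define X1 := Σ_{i even} N_{0i}·Z1·F1^i + Σ_{i odd} N_{0i}·Z2·F1^i, Y1 := Σ_{i even} D_{0i}·Z1·F1^i + Σ_{i odd} D_{0i}·Z2·F1^i, X2 := Σ_{i even} N_{0i}^#·Z2·F1^i + Σ_{i odd} N_{0i}^#·Z1·F1^i, and Y2 := Σ_{i even} D_{0i}^#·Z2·F1^i + Σ_{i odd} D_{0i}^#·Z1·F1^i (sums over i = 0,…,ω). Then A2^#X2 + B2^#Y2 = X1·F1 and A2^#X1^# + B2^#Y1^# = X2^#·F1^#; that is, (X1, X2, Y1, Y2) solves the normalization equations for the antilinear system. -/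
import Mathlib


open Matrix Finset

/-- Entrywise complex conjugate of a complex matrix. -/
noncomputable def mconj {n m : Type*} (M : Matrix n m ℂ) : Matrix n m ℂ :=
  M.map (starRingEnd ℂ)

/-- Evaluation of the polynomial matrix with coefficients `N 0, …, N ω` at `s`. -/
noncomputable def polyEval {n m : Type*} (ω : ℕ) (N : ℕ → Matrix n m ℂ) (s : ℂ) :
    Matrix n m ℂ :=
  ∑ i ∈ range (ω + 1), s ^ i • N i

lemma mconj_mul' {a b c : Type*} [Fintype b] (M : Matrix a b ℂ) (N : Matrix b c ℂ) :
    mconj (M * N) = mconj M * mconj N := by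
  unfold mconj
  exact Matrix.map_mul

lemma mconj_add' {a b : Type*} (M N : Matrix a b ℂ) :
    mconj (M + N) = mconj M + mconj N := by
  ext x y; simp [mconj]

lemma mconj_mconj' {a b : Type*} (M : Matrix a b ℂ) : mconj (mconj M) = M := by
  ext x y; simp [mconj]

lemma mconj_zero' {a b : Type*} : mconj (0 : Matrix a b ℂ) = 0 := by
  ext x y; simp [mconj]

/-- the explicit parametric formulas solve the normalization
equations of the antilinear system. -/
theorem stmt_11 {n m p : ℕ} (ω : ℕ)
    (A2 : Matrix (Fin n) (Fin n) ℂ) (B2 : Matrix (Fin n) (Fin m) ℂ)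
    (N0 : ℕ → Matrix (Fin n) (Fin m) ℂ) (D0 : ℕ → Matrix (Fin m) (Fin m) ℂ)
    (hfac : ∀ s : ℂ,
      s • polyEval ω (fun i => mconj (N0 i)) s - A2 * polyEval ω N0 s
        = B2 * polyEval ω D0 s)
    (F1 : Matrix (Fin p) (Fin p) ℂ) (Z1 Z2 : Matrix (Fin m) (Fin p) ℂ)
    (X1 X2 : Matrix (Fin n) (Fin p) ℂ) (Y1 Y2 : Matrix (Fin m) (Fin p) ℂ)
    (hX1 : X1 = ∑ i ∈ range (ω + 1),
      if Even i then N0 i * Z1 * F1 ^ i else N0 i * Z2 * F1 ^ i)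
    (hY1 : Y1 = ∑ i ∈ range (ω + 1),
      if Even i then D0 i * Z1 * F1 ^ i else D0 i * Z2 * F1 ^ i)
    (hX2 : X2 = ∑ i ∈ range (ω + 1),
      if Even i then mconj (N0 i) * Z2 * F1 ^ i else mconj (N0 i) * Z1 * F1 ^ i)
    (hY2 : Y2 = ∑ i ∈ range (ω + 1),
      if Even i then mconj (D0 i) * Z2 * F1 ^ i else mconj (D0 i) * Z1 * F1 ^ i) :
    mconj A2 * X2 + mconj B2 * Y2 = X1 * F1 ∧
      mconj A2 * mconj X1 + mconj B2 * mconj Y1 = mconj X2 * mconj F1 := by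
  -- Step 1: extract coefficient identities from the polynomial identity `hfac`.
  have hfac' : ∀ s : ℂ, ∑ i ∈ range (ω+1), s^(i+1) • mconj (N0 i)
      = ∑ i ∈ range (ω+1), s^i • (A2 * N0 i + B2 * D0 i) := by
    intro s
    have h := hfac s
    unfold polyEval at h
    rw [Finset.smul_sum, Matrix.mul_sum, Matrix.mul_sum] at h
    simp only [Matrix.mul_smul, smul_smul, ← pow_succ'] at h
    rw [sub_eq_iff_eq_add] at h
    rw [h]
    simp [smul_add, Finset.sum_add_distrib]
    abel
  have entry : ∀ x y, (∑ i ∈ range (ω+1), Polynomial.C ((mconj (N0 i)) x y) * Polynomial.X ^ (i+1))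
      = ∑ i ∈ range (ω+1), Polynomial.C ((A2 * N0 i + B2 * D0 i) x y) * Polynomial.X ^ i := by
    intro x y
    apply Polynomial.funext
    intro s
    have h := congrFun (congrFun (hfac' s) x) y
    simp only [Matrix.sum_apply, Matrix.smul_apply, smul_eq_mul] at h
    simp only [Polynomial.eval_finset_sum, Polynomial.eval_mul, Polynomial.eval_C,
      Polynomial.eval_pow, Polynomial.eval_X]
    simpa [mul_comm] using h
  have h0 : A2 * N0 0 + B2 * D0 0 = 0 := by
    ext x y
    have := congrArg (fun q => Polynomial.coeff q 0) (entry x y)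
    simpa [Polynomial.finset_sum_coeff, Polynomial.coeff_C_mul, Polynomial.coeff_X_pow]
      using this.symm
  have hstep : ∀ i, i < ω → A2 * N0 (i+1) + B2 * D0 (i+1) = mconj (N0 i) := by
    intro i hi
    ext x y
    have h2 := congrArg (fun q => Polynomial.coeff q (i+1)) (entry x y)
    simp only [Polynomial.finset_sum_coeff, Polynomial.coeff_C_mul, Polynomial.coeff_X_pow,
      mul_ite, mul_one, mul_zero, add_left_inj, Finset.sum_ite_eq, Finset.sum_ite_eq',
      Finset.mem_range] at h2
    rw [if_pos (by omega), if_pos (by omega)] at h2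
    exact h2.symm
  have htop : mconj (N0 ω) = 0 := by
    ext x y
    have h2 := congrArg (fun q => Polynomial.coeff q (ω+1)) (entry x y)
    simp only [Polynomial.finset_sum_coeff, Polynomial.coeff_C_mul, Polynomial.coeff_X_pow,
      mul_ite, mul_one, mul_zero, add_left_inj, Finset.sum_ite_eq, Finset.sum_ite_eq',
      Finset.mem_range] at h2
    rw [if_pos (by omega), if_neg (by omega)] at h2
    simpa using h2
  have hN0top : N0 ω = 0 := by
    have := congrArg mconj htop
    rwa [mconj_mconj', mconj_zero'] at this
  -- conjugated coefficient identities
  have h0c : mconj A2 * mconj (N0 0) + mconj B2 * mconj (D0 0) = 0 := by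
    have := congrArg mconj h0
    rwa [mconj_add', mconj_mul', mconj_mul', mconj_zero'] at this
  have hstepc : ∀ i, i < ω →
      mconj A2 * mconj (N0 (i+1)) + mconj B2 * mconj (D0 (i+1)) = N0 i := by
    intro i hi
    have := congrArg mconj (hstep i hi)
    rwa [mconj_add', mconj_mul', mconj_mul', mconj_mconj'] at this
  -- Step 2: the two normalization equations.
  have goalA : mconj A2 * X2 + mconj B2 * Y2 = X1 * F1 := by
    calc mconj A2 * X2 + mconj B2 * Y2
        = ∑ i ∈ range (ω+1),
            (mconj A2 * mconj (N0 i) + mconj B2 * mconj (D0 i)) *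
              ((if Even i then Z2 else Z1) * F1 ^ i) := by
          rw [hX2, hY2, Matrix.mul_sum, Matrix.mul_sum, ← Finset.sum_add_distrib]
          refine Finset.sum_congr rfl fun i _ => ?_
          split_ifs <;> simp [Matrix.add_mul, Matrix.mul_assoc]
      _ = (∑ i ∈ range ω,
            (mconj A2 * mconj (N0 (i+1)) + mconj B2 * mconj (D0 (i+1))) *
              ((if Even (i+1) then Z2 else Z1) * F1 ^ (i+1)))
          + (mconj A2 * mconj (N0 0) + mconj B2 * mconj (D0 0)) *
              ((if Even 0 then Z2 else Z1) * F1 ^ 0) :=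
          Finset.sum_range_succ' _ _
      _ = ∑ i ∈ range ω, N0 i * ((if Even i then Z1 else Z2) * F1 ^ (i+1)) := by
          rw [h0c, Matrix.zero_mul, add_zero]
          refine Finset.sum_congr rfl fun i hi => ?_
          rw [hstepc i (Finset.mem_range.mp hi)]
          by_cases h : Even i <;> simp [Nat.even_add_one, h]
      _ = X1 * F1 := by
          rw [hX1, Matrix.sum_mul, Finset.sum_range_succ]
          have : (if Even ω then N0 ω * Z1 * F1 ^ ω else N0 ω * Z2 * F1 ^ ω) * F1 = 0 := by
            split_ifs <;> simp [hN0top]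
          rw [this, add_zero]
          refine Finset.sum_congr rfl fun i _ => ?_
          split_ifs <;> simp [Matrix.mul_assoc, pow_succ]
  have goalB : A2 * X1 + B2 * Y1 = X2 * F1 := by
    calc A2 * X1 + B2 * Y1
        = ∑ i ∈ range (ω+1),
            (A2 * N0 i + B2 * D0 i) * ((if Even i then Z1 else Z2) * F1 ^ i) := by
          rw [hX1, hY1, Matrix.mul_sum, Matrix.mul_sum, ← Finset.sum_add_distrib]
          refine Finset.sum_congr rfl fun i _ => ?_
          split_ifs <;> simp [Matrix.add_mul, Matrix.mul_assoc]
      _ = (∑ i ∈ range ω,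
            (A2 * N0 (i+1) + B2 * D0 (i+1)) * ((if Even (i+1) then Z1 else Z2) * F1 ^ (i+1)))
          + (A2 * N0 0 + B2 * D0 0) * ((if Even 0 then Z1 else Z2) * F1 ^ 0) :=
          Finset.sum_range_succ' _ _
      _ = ∑ i ∈ range ω, mconj (N0 i) * ((if Even i then Z2 else Z1) * F1 ^ (i+1)) := by
          rw [h0, Matrix.zero_mul, add_zero]
          refine Finset.sum_congr rfl fun i hi => ?_
          rw [hstep i (Finset.mem_range.mp hi)]
          by_cases h : Even i <;> simp [Nat.even_add_one, h]
      _ = X2 * F1 := by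
          rw [hX2, Matrix.sum_mul, Finset.sum_range_succ]
          have : (if Even ω then mconj (N0 ω) * Z2 * F1 ^ ω else mconj (N0 ω) * Z1 * F1 ^ ω) * F1
              = 0 := by
            split_ifs <;> simp [htop]
          rw [this, add_zero]
          refine Finset.sum_congr rfl fun i _ => ?_
          split_ifs <;> simp [Matrix.mul_assoc, pow_succ]
  refine ⟨goalA, ?_⟩
  have := congrArg mconj goalB
  rwa [mconj_add', mconj_mul', mconj_mul', mconj_mul'] at this
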